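/- arXiv:2412.05674 — 2 statements merged into one kernel-verified Lean document; each statement's English description precedes it below -/
import Mathlib

section
/- Let T be the 2×2 matrix with diagonal entries (D²d−1)/(D²d³−d) and off-diagonal entries (Dd−D)/(D²d³−d), and let S = diag(d,1). Then tr[(S·T)^n] = 1/d^n + ((D²−1)/(D²d²−1))^n for all positive integers n. -/
/-!
The matrix `S·T` has trace `1/d + λ` and determinant `λ/d`, where `λ = (D²−1)/(D²d²−1)`, so its
eigenvalues are `1/d` and `λ`. For a `2 × 2` matrix, Cayley–Hamilton (`M² = tr M • M − det M • 1`)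
gives `tr M^(n+2) = tr M · tr M^(n+1) − det M · tr M^n`, the same recurrence as the power sums
`aⁿ + bⁿ` of any `a, b` with `a + b = tr M` and `a b = det M`.
-/

namespace Matrix

variable {R : Type*} [CommRing R]

theorem mul_self_fin_two (M : Matrix (Fin 2) (Fin 2) R) :
    M * M = M.trace • M - M.det • 1 := by
  ext i j
  fin_cases i <;> fin_cases j <;>
    simp [mul_apply, trace_fin_two, det_fin_two] <;> ring

theorem trace_pow_add_two_fin_two (M : Matrix (Fin 2) (Fin 2) R) (n : ℕ) :
    (M ^ (n + 2)).trace = M.trace * (M ^ (n + 1)).trace - M.det * (M ^ n).trace := by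
  rw [pow_add, sq, mul_self_fin_two, Matrix.mul_sub, Matrix.mul_smul, Matrix.mul_smul, mul_one,
    ← pow_succ, trace_sub, trace_smul, trace_smul, smul_eq_mul, smul_eq_mul]

theorem trace_pow_fin_two_of_trace_det {M : Matrix (Fin 2) (Fin 2) R} {a b : R}
    (htrace : M.trace = a + b) (hdet : M.det = a * b) (n : ℕ) :
    (M ^ n).trace = a ^ n + b ^ n := by
  induction n using Nat.twoStepInduction with
  | zero => simp [one_add_one_eq_two]
  | one => simpa using htrace
  | more n ih₀ ih₁ =>
    rw [trace_pow_add_two_fin_two, ih₀, ih₁, htrace, hdet]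
    ring

end Matrix

section MPSTransfer

variable {K : Type*} [Field K]

def mpsTransfer (D d : K) : Matrix (Fin 2) (Fin 2) K :=
  !![(D ^ 2 * d - 1) / (D ^ 2 * d ^ 3 - d), (D * d - D) / (D ^ 2 * d ^ 3 - d);
     (D * d - D) / (D ^ 2 * d ^ 3 - d), (D ^ 2 * d - 1) / (D ^ 2 * d ^ 3 - d)]

private theorem transfer_denom_eq (D d : K) : D ^ 2 * d ^ 3 - d = d * (D ^ 2 * d ^ 2 - 1) := by
  ring

variable {D d : K}

theorem trace_diag_mul_mpsTransfer (hd : d ≠ 0) (hdD : d ^ 2 * D ^ 2 ≠ 1) :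
    (!![d, 0; 0, 1] * mpsTransfer D d).trace = d⁻¹ + (D ^ 2 - 1) / (D ^ 2 * d ^ 2 - 1) := by
  rw [mpsTransfer, transfer_denom_eq, Matrix.mul_fin_two, Matrix.trace_fin_two_of]
  field_simp
  ring

theorem det_diag_mul_mpsTransfer (hd : d ≠ 0) (hdD : d ^ 2 * D ^ 2 ≠ 1) :
    (!![d, 0; 0, 1] * mpsTransfer D d).det = d⁻¹ * ((D ^ 2 - 1) / (D ^ 2 * d ^ 2 - 1)) := by
  rw [mpsTransfer, transfer_denom_eq, Matrix.mul_fin_two, Matrix.det_fin_two_of]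
  field_simp
  ring

theorem trace_pow_diag_mul_mpsTransfer (hd : d ≠ 0) (hdD : d ^ 2 * D ^ 2 ≠ 1) (n : ℕ) :
    ((!![d, 0; 0, 1] * mpsTransfer D d) ^ n).trace =
      d⁻¹ ^ n + ((D ^ 2 - 1) / (D ^ 2 * d ^ 2 - 1)) ^ n :=
  Matrix.trace_pow_fin_two_of_trace_det (trace_diag_mul_mpsTransfer hd hdD)
    (det_diag_mul_mpsTransfer hd hdD) n

end MPSTransfer

theorem trace_S_transfer_pow_general (D d : ℕ) (hd : 2 ≤ d) (n : ℕ) :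
    let Dr : ℝ := (D : ℝ)
    let dr : ℝ := (d : ℝ)
    let T : Matrix (Fin 2) (Fin 2) ℝ :=
      !![(Dr ^ 2 * dr - 1) / (Dr ^ 2 * dr ^ 3 - dr), (Dr * dr - Dr) / (Dr ^ 2 * dr ^ 3 - dr);
         (Dr * dr - Dr) / (Dr ^ 2 * dr ^ 3 - dr), (Dr ^ 2 * dr - 1) / (Dr ^ 2 * dr ^ 3 - dr)]
    let S : Matrix (Fin 2) (Fin 2) ℝ := !![dr, 0; 0, 1]
    ((S * T) ^ n).trace = 1 / dr ^ n + ((Dr ^ 2 - 1) / (Dr ^ 2 * dr ^ 2 - 1)) ^ n := by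
  intro Dr dr T S
  have hdD : (d * D) ^ 2 ≠ 1 := by
    rcases Nat.eq_zero_or_pos D with rfl | hD
    · simp
    · nlinarith [Nat.mul_le_mul hd hD]
  have hdD' : dr ^ 2 * Dr ^ 2 ≠ 1 := by
    rw [← mul_pow]
    simp only [Dr, dr]
    exact_mod_cast hdD
  rw [one_div, ← inv_pow]
  exact trace_pow_diag_mul_mpsTransfer (by positivity) hdD' n

/-- Transfer-matrix identity for the 1D MPS second-moment computation:
with `T` the symmetric transfer matrix and `S = diag(d,1)`,
`tr[(S·T)^n] = 1/d^n + ((D²−1)/(D²d²−1))^n`. -/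
theorem trace_S_transfer_pow (D d : ℕ) (hD : 2 ≤ D) (hd : 2 ≤ d) (n : ℕ) (hn : 0 < n) :
    let Dr : ℝ := (D : ℝ)
    let dr : ℝ := (d : ℝ)
    let T : Matrix (Fin 2) (Fin 2) ℝ :=
      !![(Dr ^ 2 * dr - 1) / (Dr ^ 2 * dr ^ 3 - dr), (Dr * dr - Dr) / (Dr ^ 2 * dr ^ 3 - dr);
         (Dr * dr - Dr) / (Dr ^ 2 * dr ^ 3 - dr), (Dr ^ 2 * dr - 1) / (Dr ^ 2 * dr ^ 3 - dr)]
    let S : Matrix (Fin 2) (Fin 2) ℝ := !![dr, 0; 0, 1]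
    ((S * T) ^ n).trace = 1 / dr ^ n + ((Dr ^ 2 - 1) / (Dr ^ 2 * dr ^ 2 - 1)) ^ n :=
  trace_S_transfer_pow_general D d hd n
end

section
/- In the supervised task of learning an N-dimensional unitary with risk R_U(V) = 1 − (N + |tr(U†V)|²)/(N(N+1)), if the training set consists of t orthonormal states learned perfectly (so that U†V = e^{iθ₁}⊕…⊕e^{iθ_t}⊕Y with Y a Haar-random unitary on the complement), then the average risk over Y is at least 1 − (N + t² + 1)/(N(N+1)). -/
/-!
Write `a = ∑ⱼ e^{iθⱼ}`, so `‖a‖ ≤ t`; it suffices to show `E ‖a + tr Y‖² = ‖a‖² + 1` for Haar-random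
`Y`. Left invariance of the measure does all the work: multiplying by `-1` kills `E tr Y`,
multiplying by a diagonal sign matrix kills `E Yᵢᵢ conj Yⱼⱼ` for `i ≠ j`, and a transposition
matrix turns `E |Yᵢᵢ|²` into `E |Y_{i₀ i}|²`, whose sum over `i` is the squared norm of a row of a
unitary matrix, i.e. `1`.
-/

open MeasureTheory Matrix ComplexConjugate

theorem Continuous.integrable_of_compactSpace {X E : Type*} [TopologicalSpace X] [CompactSpace X]
    [MeasurableSpace X] [OpensMeasurableSpace X] [NormedAddCommGroup E] {μ : Measure X}
    [IsFiniteMeasure μ] {f : X → E} (hf : Continuous f) : Integrable f μ :=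
  hf.integrable_of_hasCompactSupport (.of_compactSpace f)

namespace Matrix

variable {ι 𝕜 : Type*} [Fintype ι] [DecidableEq ι] [RCLike 𝕜]

theorem diagonal_mem_unitaryGroup {d : ι → 𝕜} (hd : ∀ k, ‖d k‖ = 1) :
    diagonal d ∈ unitaryGroup ι 𝕜 := by
  rw [mem_unitaryGroup_iff, star_eq_conjTranspose, diagonal_conjTranspose, diagonal_mul_diagonal,
    ← diagonal_one]
  congr 1
  ext k
  simp [RCLike.mul_conj, hd]

theorem permMatrix_mem_unitaryGroup {R : Type*} [CommRing R] [StarRing R] (σ : Equiv.Perm ι) :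
    σ.permMatrix R ∈ unitaryGroup ι R := by
  rw [mem_unitaryGroup_iff, star_eq_conjTranspose, conjTranspose_permMatrix, ← permMatrix_mul,
    inv_mul_cancel, permMatrix_one]

instance : CompactSpace (unitaryGroup ι 𝕜) := by
  refine isCompact_iff_compactSpace.mp ?_
  have hsub : (unitaryGroup ι 𝕜 : Set (Matrix ι ι 𝕜)) ⊆
      Set.univ.pi fun _ => Set.univ.pi fun _ => Metric.closedBall (0 : 𝕜) 1 :=
    fun U hU i _ j _ => by simpa using entry_norm_bound_of_unitary hU i j
  exact (isCompact_univ_pi fun _ => isCompact_univ_pi fun _ => isCompact_closedBall _ _)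
    |>.of_isClosed_subset (isClosed_unitary (R := Matrix ι ι 𝕜)) hsub

end Matrix

namespace Matrix.unitaryGroup

variable {ι 𝕜 : Type*} [Fintype ι] [DecidableEq ι] [RCLike 𝕜]
  [MeasurableSpace (unitaryGroup ι 𝕜)] [BorelSpace (unitaryGroup ι 𝕜)]
  {μ : Measure (unitaryGroup ι 𝕜)} [μ.IsMulLeftInvariant]

theorem integral_trace_eq_zero : ∫ Y : unitaryGroup ι 𝕜, trace (Y : Matrix ι ι 𝕜) ∂μ = 0 :=
  integral_eq_zero_of_mul_left_eq_neg (g := -1) fun Y => by simp [Unitary.coe_neg]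

theorem integral_diag_mul_conj_diag_of_ne {i j : ι} (hij : i ≠ j) :
    ∫ Y : unitaryGroup ι 𝕜, (Y : Matrix ι ι 𝕜) i i * conj ((Y : Matrix ι ι 𝕜) j j) ∂μ = 0 := by
  let g : unitaryGroup ι 𝕜 := ⟨diagonal (Function.update 1 i (-1)),
    diagonal_mem_unitaryGroup fun k => by rcases eq_or_ne k i with rfl | hk <;> simp [*]⟩
  refine integral_eq_zero_of_mul_left_eq_neg (g := g) fun Y => ?_
  simp [g, diagonal_mul, Function.update_of_ne hij.symm]

theorem integral_entry_mul_conj_entry_eq (i k j : ι) :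
    ∫ Y : unitaryGroup ι 𝕜, (Y : Matrix ι ι 𝕜) i j * conj ((Y : Matrix ι ι 𝕜) i j) ∂μ =
      ∫ Y : unitaryGroup ι 𝕜, (Y : Matrix ι ι 𝕜) k j * conj ((Y : Matrix ι ι 𝕜) k j) ∂μ := by
  let g : unitaryGroup ι 𝕜 := ⟨(Equiv.swap i k).permMatrix 𝕜, permMatrix_mem_unitaryGroup _⟩
  rw [← integral_mul_left_eq_self _ g]
  congr with Y
  simp [g, Equiv.Perm.permMatrix, PEquiv.toMatrix_toPEquiv_mul]

theorem integral_norm_trace_sq [Nonempty ι] [IsProbabilityMeasure μ] :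
    ∫ Y : unitaryGroup ι 𝕜, ‖trace (Y : Matrix ι ι 𝕜)‖ ^ 2 ∂μ = 1 := by
  obtain ⟨i₀⟩ := ‹Nonempty ι›
  have hint : ∀ i j k l, Integrable (fun Y : unitaryGroup ι 𝕜 =>
      (Y : Matrix ι ι 𝕜) i j * conj ((Y : Matrix ι ι 𝕜) k l)) μ := fun i j k l =>
    ((continuous_subtype_val.matrix_elem i j).mul
      (continuous_subtype_val.matrix_elem k l).star).integrable_of_compactSpace
  have hrow : ∀ Y : unitaryGroup ι 𝕜,
      ∑ i, (Y : Matrix ι ι 𝕜) i₀ i * conj ((Y : Matrix ι ι 𝕜) i₀ i) = 1 := fun Y => by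
    simpa [mul_apply] using congr_fun₂ (mem_unitaryGroup_iff.mp Y.2) i₀ i₀
  suffices h : ∫ Y : unitaryGroup ι 𝕜,
      trace (Y : Matrix ι ι 𝕜) * conj (trace (Y : Matrix ι ι 𝕜)) ∂μ = 1 by
    simp_rw [RCLike.mul_conj, ← RCLike.ofReal_pow, integral_ofReal] at h
    exact_mod_cast h
  calc ∫ Y : unitaryGroup ι 𝕜, trace (Y : Matrix ι ι 𝕜) * conj (trace (Y : Matrix ι ι 𝕜)) ∂μ
      = ∑ i, ∑ j, ∫ Y : unitaryGroup ι 𝕜,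
          (Y : Matrix ι ι 𝕜) i i * conj ((Y : Matrix ι ι 𝕜) j j) ∂μ := by
        simp_rw [trace, map_sum, Finset.sum_mul_sum, diag_apply]
        rw [integral_finsetSum _ fun i _ => integrable_finsetSum _ fun j _ => hint i i j j]
        simp_rw [integral_finsetSum _ fun j _ => hint _ _ j j]
    _ = ∑ i, ∫ Y : unitaryGroup ι 𝕜,
          (Y : Matrix ι ι 𝕜) i₀ i * conj ((Y : Matrix ι ι 𝕜) i₀ i) ∂μ := by
        refine Finset.sum_congr rfl fun i _ => ?_
        rw [Finset.sum_eq_single_of_mem i (Finset.mem_univ i)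
          fun j _ hji => integral_diag_mul_conj_diag_of_ne hji.symm,
          integral_entry_mul_conj_entry_eq i i₀ i]
    _ = 1 := by
        rw [← integral_finsetSum _ fun i _ => hint i₀ i i₀ i]
        simp [hrow]

theorem integral_norm_add_trace_sq [Nonempty ι] [IsProbabilityMeasure μ] (a : 𝕜) :
    ∫ Y : unitaryGroup ι 𝕜, ‖a + trace (Y : Matrix ι ι 𝕜)‖ ^ 2 ∂μ = ‖a‖ ^ 2 + 1 := by
  have htrace : Continuous fun Y : unitaryGroup ι 𝕜 => trace (Y : Matrix ι ι 𝕜) :=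
    continuous_subtype_val.matrix_trace
  have hcross_cont : Continuous fun Y : unitaryGroup ι 𝕜 => a * conj (trace (Y : Matrix ι ι 𝕜)) :=
    continuous_const.mul (RCLike.continuous_conj.comp htrace)
  have hcross : ∫ Y : unitaryGroup ι 𝕜, RCLike.re (a * conj (trace (Y : Matrix ι ι 𝕜))) ∂μ = 0 := by
    rw [integral_re hcross_cont.integrable_of_compactSpace, integral_const_mul, integral_conj,
      integral_trace_eq_zero]
    simp
  have hexpand : ∀ z : 𝕜, ‖a + z‖ ^ 2 = ‖a‖ ^ 2 + ‖z‖ ^ 2 + 2 * RCLike.re (a * conj z) := by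
    simp [← RCLike.normSq_eq_def', RCLike.normSq_add]
  have hnorm : Integrable (fun Y : unitaryGroup ι 𝕜 => ‖trace (Y : Matrix ι ι 𝕜)‖ ^ 2) μ :=
    (htrace.norm.pow 2).integrable_of_compactSpace
  have hre : Integrable (fun Y : unitaryGroup ι 𝕜 =>
      RCLike.re (a * conj (trace (Y : Matrix ι ι 𝕜)))) μ :=
    (RCLike.continuous_re.comp hcross_cont).integrable_of_compactSpace
  simp_rw [hexpand]
  rw [integral_add ?_ (hre.const_mul 2), integral_add (integrable_const _) hnorm,
    integral_const_mul, hcross, integral_const, integral_norm_trace_sq]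
  · simp
  · exact (integrable_const _).add hnorm

end Matrix.unitaryGroup

open MeasureTheory Matrix in
/-- NFL lower bound for learning an `N`-dimensional unitary from `t` perfectly learned
orthonormal training states: with `U†V = e^{iθ₁}⊕…⊕e^{iθ_t}⊕Y` and `Y` Haar-random on the
complement, the average of the risk `1 − (N + |tr(U†V)|²)/(N(N+1))` over `Y` is at least
`1 − (N + t² + 1)/(N(N+1))`. -/
theorem nfl_average_risk_lower_bound (N t : ℕ) (htN : t < N)
    [MeasurableSpace (Matrix.unitaryGroup (Fin (N - t)) ℂ)]
    [BorelSpace (Matrix.unitaryGroup (Fin (N - t)) ℂ)]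
    (μ : Measure (Matrix.unitaryGroup (Fin (N - t)) ℂ))
    [μ.IsHaarMeasure] [IsProbabilityMeasure μ]
    (θ : Fin t → ℝ) :
    1 - ((N : ℝ) + t ^ 2 + 1) / (N * (N + 1)) ≤
      ∫ Y : Matrix.unitaryGroup (Fin (N - t)) ℂ,
        (1 - ((N : ℝ) +
          ‖(∑ j, Complex.exp (θ j * Complex.I)) +
            Matrix.trace (Y : Matrix (Fin (N - t)) (Fin (N - t)) ℂ)‖ ^ 2) /
          (N * (N + 1))) ∂μ := by
  set a : ℂ := ∑ j, Complex.exp (θ j * Complex.I)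
  have : Nonempty (Fin (N - t)) := ⟨⟨0, by omega⟩⟩
  have ha : ‖a‖ ≤ t := (norm_sum_le _ _).trans (by simp [Complex.norm_exp_ofReal_mul_I])
  have hint : Integrable (fun Y : unitaryGroup (Fin (N - t)) ℂ =>
      ‖a + trace (Y : Matrix (Fin (N - t)) (Fin (N - t)) ℂ)‖ ^ 2) μ :=
    Continuous.integrable_of_compactSpace <|
      (continuous_const.add continuous_subtype_val.matrix_trace).norm.pow 2
  rw [integral_sub (integrable_const _) ?_, integral_div, integral_add (integrable_const _) hint,
    unitaryGroup.integral_norm_add_trace_sq]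
  · simp only [integral_const, probReal_univ, one_smul]
    gcongr 1 - ?_ / _
    linarith [pow_le_pow_left₀ (norm_nonneg a) ha 2]
  · exact ((integrable_const _).add hint).div_const _
end
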